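/- (Pointwise form of Proposition 1.) In the CROP setup, there exists β₀ ≥ 0 such that for all β ≥ β₀ and all (s,a) ∈ S × A: Q̂^π_β(s,a) ≤ Q^π(s,a). -/
import Mathlib


open Finset

section Defs

variable {S A : Type*} [Fintype S] [Fintype A]

/-- A transition kernel: nonnegative entries, each row sums to one. -/
def IsKernel (T : S → A → S → ℝ) : Prop :=
  (∀ s a s', 0 ≤ T s a s') ∧ ∀ s a, ∑ s', T s a s' = 1

/-- A policy: nonnegative probabilities summing to one at each state. -/
def IsPolicy (π : S → A → ℝ) : Prop :=
  (∀ s a, 0 ≤ π s a) ∧ ∀ s, ∑ a, π s a = 1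

/-- The state–action transition matrix `T^π`. -/
def saMatrix (T : S → A → S → ℝ) (π : S → A → ℝ) :
    Matrix (S × A) (S × A) ℝ :=
  Matrix.of fun p q => T p.1 p.2 q.1 * π q.1 q.2

/-- The Bellman operator `B^{T,r,π} Q = r + γ · T^π Q`. -/
def bellman (T : S → A → S → ℝ) (r : S × A → ℝ) (π : S → A → ℝ) (γ : ℝ)
    (Q : S × A → ℝ) : S × A → ℝ :=
  fun p => r p + γ * ∑ q, saMatrix T π p q * Q q

/-- The operator `S^π = (I − γ·T^π)⁻¹` acting on functions `S × A → ℝ`. -/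
noncomputable def Sop [DecidableEq S] [DecidableEq A]
    (T : S → A → S → ℝ) (π : S → A → ℝ) (γ : ℝ) (u : S × A → ℝ) :
    S × A → ℝ :=
  ((1 : Matrix (S × A) (S × A) ℝ) - γ • saMatrix T π)⁻¹.mulVec u

end Defs

section Aux

variable {S A : Type*} [Fintype S] [Fintype A] [Nonempty S] [Nonempty A]

lemma saMatrix_nonneg {T : S → A → S → ℝ} (hT : IsKernel T) {π : S → A → ℝ}
    (hπ : IsPolicy π) (p q : S × A) : 0 ≤ saMatrix T π p q :=
  mul_nonneg (hT.1 _ _ _) (hπ.1 _ _)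

lemma saMatrix_row_sum {T : S → A → S → ℝ} (hT : IsKernel T) {π : S → A → ℝ}
    (hπ : IsPolicy π) (p : S × A) : ∑ q, saMatrix T π p q = 1 := by
  rw [Fintype.sum_prod_type]
  simp only [saMatrix, Matrix.of_apply]
  calc ∑ s', ∑ a', T p.1 p.2 s' * π s' a'
      = ∑ s', T p.1 p.2 s' * ∑ a', π s' a' := by simp [Finset.mul_sum]
    _ = 1 := by simp [hπ.2, hT.2]

lemma fixed_le (T : S → A → S → ℝ) (hT : IsKernel T) (π : S → A → ℝ)
    (hπ : IsPolicy π) (γ : ℝ) (hγ0 : 0 ≤ γ) (hγ1 : γ < 1)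
    (r : S × A → ℝ) (Q Q' : S × A → ℝ) (hQ : bellman T r π γ Q = Q)
    (hQ' : ∀ p, bellman T r π γ Q' p ≤ Q' p) : ∀ p, Q p ≤ Q' p := by
  set M := (univ : Finset (S × A)).sup' univ_nonempty (fun q => Q q - Q' q) with hM
  have key : ∀ p, Q p - Q' p ≤ γ * M := by
    intro p
    have h1 : Q p - Q' p ≤ bellman T r π γ Q p - bellman T r π γ Q' p := by
      conv_lhs => rw [← hQ]
      linarith [hQ' p]
    have h2 : bellman T r π γ Q p - bellman T r π γ Q' p
        = γ * ∑ q, saMatrix T π p q * (Q q - Q' q) := by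
      have : ∑ q, saMatrix T π p q * (Q q - Q' q)
          = ∑ q, saMatrix T π p q * Q q - ∑ q, saMatrix T π p q * Q' q := by
        rw [← Finset.sum_sub_distrib]; congr 1; funext q; ring
      simp only [bellman, this]; ring
    have h3 : ∑ q, saMatrix T π p q * (Q q - Q' q) ≤ M := by
      calc ∑ q, saMatrix T π p q * (Q q - Q' q)
          ≤ ∑ q, saMatrix T π p q * M := by
            apply Finset.sum_le_sum
            intro q _
            exact mul_le_mul_of_nonneg_left
              (Finset.le_sup' (fun q => Q q - Q' q) (mem_univ q))
              (saMatrix_nonneg hT hπ p q)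
        _ = (∑ q, saMatrix T π p q) * M := by rw [Finset.sum_mul]
        _ = M := by rw [saMatrix_row_sum hT hπ p, one_mul]
    calc Q p - Q' p ≤ γ * ∑ q, saMatrix T π p q * (Q q - Q' q) := by rw [← h2]; exact h1
      _ ≤ γ * M := mul_le_mul_of_nonneg_left h3 hγ0
  have hMle : M ≤ γ * M := by
    rw [hM]
    exact Finset.sup'_le _ _ fun q _ => key q
  have hM0 : M ≤ 0 := by nlinarith
  intro p
  have := Finset.le_sup' (fun q => Q q - Q' q) (mem_univ p)
  have : Q p - Q' p ≤ M := this
  linarith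

end Aux

/-- Pointwise form of Proposition 1: for sufficiently large `β`, the CROP
Q-function underestimates the true Q-function at every state–action pair. -/
theorem stmt_10 {S A : Type*} [Fintype S] [Fintype A] [Nonempty S] [Nonempty A]
    (T : S → A → S → ℝ) (hT : IsKernel T)
    (R : S × A → ℝ) (Rmax : ℝ) (hR : ∀ p : S × A, |R p| ≤ Rmax)
    (πbar : S → A → ℝ) (hπbar : IsPolicy πbar)
    (hπbarpos : ∀ s a, 0 < πbar s a)
    (μ : ℝ) (hμ : μ = (Fintype.card A : ℝ)⁻¹)
    (π : S → A → ℝ) (hπ : IsPolicy π)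
    (γ : ℝ) (hγ0 : 0 ≤ γ) (hγ1 : γ < 1)
    (N : S × A → ℝ) (hN : ∀ p : S × A, 1 ≤ N p)
    (Cr CT εr εT : ℝ)
    (hCr : 0 ≤ Cr) (hCT : 0 ≤ CT) (hεr : 0 ≤ εr) (hεT : 0 ≤ εT)
    (f : ℝ) (hf0 : 0 ≤ f) (hf1 : f ≤ 1)
    (Tbar That : S → A → S → ℝ) (hTbar : IsKernel Tbar) (hThat : IsKernel That)
    (hTbarT : ∀ s a, ∑ s', |Tbar s a s' - T s a s'| ≤ CT / Real.sqrt (N (s, a)))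
    (hThatTbar : ∀ s a, ∑ s', |That s a s' - Tbar s a s'| ≤ εT)
    (rbar rhat : ℝ → S × A → ℝ)
    (hrbar : ∀ β, 0 ≤ β → ∀ p : S × A,
      |rbar β p - (R p - β * μ / πbar p.1 p.2)| ≤ Cr / Real.sqrt (N p))
    (hrhat : ∀ β, 0 ≤ β → ∀ p : S × A, |rhat β p - rbar β p| ≤ εr)
    (Tf : S → A → S → ℝ)
    (hTf : ∀ s a s', Tf s a s' = (1 - f) * Tbar s a s' + f * That s a s')
    (Qpi : S × A → ℝ) (hQpi : bellman T R π γ Qpi = Qpi)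
    (Qhat : ℝ → S × A → ℝ)
    (hQhat : ∀ β, 0 ≤ β → bellman Tf (rhat β) π γ (Qhat β) = Qhat β) :
    ∃ β₀ : ℝ, 0 ≤ β₀ ∧ ∀ β, β₀ ≤ β → ∀ p : S × A, Qhat β p ≤ Qpi p := by
  have hcardA : 0 < (Fintype.card A : ℝ) := by exact_mod_cast Fintype.card_pos
  have hμpos : 0 < μ := by rw [hμ]; positivity
  set V := (univ : Finset (S × A)).sup' univ_nonempty (fun q => |Qpi q|) with hVdef
  have hV : ∀ q : S × A, |Qpi q| ≤ V := fun q =>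
    Finset.le_sup' (fun q : S × A => |Qpi q|) (mem_univ q)
  have hV0 : 0 ≤ V := le_trans (abs_nonneg _) (hV (Classical.arbitrary _))
  refine ⟨(Cr + εr + γ * ((CT + εT) * V)) / μ, by positivity, ?_⟩
  intro β hβ
  have hβ0 : 0 ≤ β := le_trans (by positivity) hβ
  have hβμ : Cr + εr + γ * ((CT + εT) * V) ≤ β * μ := (div_le_iff₀ hμpos).mp hβ
  -- Tf is a kernel
  have hTfK : IsKernel Tf := by
    constructor
    · intro s a s'
      rw [hTf]
      have := hTbar.1 s a s'
      have := hThat.1 s a s'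
      nlinarith
    · intro s a
      simp only [hTf]
      rw [Finset.sum_add_distrib, ← Finset.mul_sum, ← Finset.mul_sum,
        hTbar.2 s a, hThat.2 s a]
      ring
  -- sqrt N ≥ 1
  have hsqrtN : ∀ p : S × A, 1 ≤ Real.sqrt (N p) := by
    intro p
    rw [show (1:ℝ) = Real.sqrt 1 by simp]
    exact Real.sqrt_le_sqrt (hN p)
  -- key: Qpi is a super-fixed point of the CROP Bellman operator
  have hsuper : ∀ p : S × A, bellman Tf (rhat β) π γ Qpi p ≤ Qpi p := by
    intro p
    -- reward bound
    have hπbar1 : πbar p.1 p.2 ≤ 1 := by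
      have h := Finset.single_le_sum (f := fun a => πbar p.1 a)
        (fun a _ => hπbar.1 p.1 a) (mem_univ p.2)
      rw [hπbar.2 p.1] at h
      exact h
    have hr : rhat β p ≤ R p - β * μ + Cr + εr := by
      have h1 := abs_le.mp (hrhat β hβ0 p)
      have h2 := abs_le.mp (hrbar β hβ0 p)
      have h3 : Cr / Real.sqrt (N p) ≤ Cr := div_le_self hCr (hsqrtN p)
      have h4 : β * μ ≤ β * μ / πbar p.1 p.2 := by
        rw [le_div_iff₀ (hπbarpos p.1 p.2)]
        nlinarith [mul_nonneg hβ0 hμpos.le]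
      linarith [h1.2, h2.2]
    -- transition bound
    have hrowdiff : ∑ q : S × A, |saMatrix Tf π p q - saMatrix T π p q| ≤ CT + εT := by
      have habs : ∀ q : S × A, |saMatrix Tf π p q - saMatrix T π p q|
          = |Tf p.1 p.2 q.1 - T p.1 p.2 q.1| * π q.1 q.2 := by
        intro q
        simp only [saMatrix, Matrix.of_apply, ← sub_mul]
        rw [abs_mul, abs_of_nonneg (hπ.1 q.1 q.2)]
      rw [Fintype.sum_prod_type]
      simp only [habs]
      have hcol : ∀ s', ∑ a', |Tf p.1 p.2 s' - T p.1 p.2 s'| * π s' a'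
          = |Tf p.1 p.2 s' - T p.1 p.2 s'| := by
        intro s'; rw [← Finset.mul_sum, hπ.2 s', mul_one]
      rw [Finset.sum_congr rfl (fun s' _ => hcol s')]
      have hpt : ∀ s', |Tf p.1 p.2 s' - T p.1 p.2 s'|
          ≤ |Tbar p.1 p.2 s' - T p.1 p.2 s'| + f * |That p.1 p.2 s' - Tbar p.1 p.2 s'| := by
        intro s'
        rw [hTf]
        have heq : (1 - f) * Tbar p.1 p.2 s' + f * That p.1 p.2 s' - T p.1 p.2 s'
            = (Tbar p.1 p.2 s' - T p.1 p.2 s') + f * (That p.1 p.2 s' - Tbar p.1 p.2 s') := by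
          ring
        rw [heq]
        refine (abs_add_le _ _).trans ?_
        rw [abs_mul, abs_of_nonneg hf0]
      calc ∑ s', |Tf p.1 p.2 s' - T p.1 p.2 s'|
          ≤ ∑ s', (|Tbar p.1 p.2 s' - T p.1 p.2 s'|
              + f * |That p.1 p.2 s' - Tbar p.1 p.2 s'|) :=
            Finset.sum_le_sum fun s' _ => hpt s'
        _ = (∑ s', |Tbar p.1 p.2 s' - T p.1 p.2 s'|)
              + f * ∑ s', |That p.1 p.2 s' - Tbar p.1 p.2 s'| := by
            rw [Finset.sum_add_distrib, Finset.mul_sum]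
        _ ≤ CT / Real.sqrt (N (p.1, p.2)) + f * εT := by
            have h5 := hTbarT p.1 p.2
            have h6 := hThatTbar p.1 p.2
            have h7 : f * ∑ s', |That p.1 p.2 s' - Tbar p.1 p.2 s'| ≤ f * εT :=
              mul_le_mul_of_nonneg_left h6 hf0
            linarith
        _ ≤ CT + εT := by
            have h8 : CT / Real.sqrt (N (p.1, p.2)) ≤ CT :=
              div_le_self hCT (hsqrtN (p.1, p.2))
            have h9 : f * εT ≤ εT := by nlinarith
            linarith
    have hdiff : ∑ q, (saMatrix Tf π p q - saMatrix T π p q) * Qpi q ≤ (CT + εT) * V := by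
      calc ∑ q, (saMatrix Tf π p q - saMatrix T π p q) * Qpi q
          ≤ ∑ q, |saMatrix Tf π p q - saMatrix T π p q| * V := by
            apply Finset.sum_le_sum
            intro q _
            calc (saMatrix Tf π p q - saMatrix T π p q) * Qpi q
                ≤ |(saMatrix Tf π p q - saMatrix T π p q) * Qpi q| := le_abs_self _
              _ = |saMatrix Tf π p q - saMatrix T π p q| * |Qpi q| := abs_mul _ _
              _ ≤ |saMatrix Tf π p q - saMatrix T π p q| * V :=
                  mul_le_mul_of_nonneg_left (hV q) (abs_nonneg _)
        _ = (∑ q, |saMatrix Tf π p q - saMatrix T π p q|) * V := by rw [Finset.sum_mul]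
        _ ≤ (CT + εT) * V := mul_le_mul_of_nonneg_right hrowdiff hV0
    have hsplit : ∑ q, saMatrix Tf π p q * Qpi q
        = ∑ q, saMatrix T π p q * Qpi q
          + ∑ q, (saMatrix Tf π p q - saMatrix T π p q) * Qpi q := by
      rw [← Finset.sum_add_distrib]; congr 1; funext q; ring
    have hγdiff : γ * ∑ q, (saMatrix Tf π p q - saMatrix T π p q) * Qpi q
        ≤ γ * ((CT + εT) * V) := mul_le_mul_of_nonneg_left hdiff hγ0
    have hQp : Qpi p = R p + γ * ∑ q, saMatrix T π p q * Qpi q := by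
      conv_lhs => rw [← hQpi]
      rfl
    simp only [bellman]
    rw [hQp, hsplit]
    nlinarith
  exact fixed_le Tf hTfK π hπ γ hγ0 hγ1 (rhat β) (Qhat β) Qpi (hQhat β hβ0) hsuper
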